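/- arXiv:1202.2542 — 3 statements merged into one kernel-verified Lean document; each statement's English description precedes it below -/
import Mathlib

section
/- Let K(t,u) = 1 + (14/15)·(4(t−1/2)(u−1/2))^{1/5} for t,u ∈ [0,1], and let f₂(t) = 3/4 + √(21/5)·(2^{1/5}/4)·(t−1/2)^{1/5}. Then ∫₀¹ K(t,u)·f₂(u)² du = f₂(t) for all t ∈ [0,1]. -/
/-!
Substituting `x = u - 1/2` and using that the odd root is multiplicative, the integrand becomes
`(1 + λ s)(3/4 + c s)²` with `s = x^(1/5)`, `λ = (14/15)·4^(1/5)·(t - 1/2)^(1/5)` and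
`c = √(21/5)·2^(1/5)/4`. Over the symmetric interval `[-1/2, 1/2]` only the even part
`9/16 + (c² + (3/2)λc)·s²` survives, and `∫ s² = ∫ |x|^(2/5) = (5/7)·(1/2)^(2/5)` by the power
rule. Since `c² = (21/80)·4^(1/5)` and `4^(1/5)·(1/2)^(2/5) = 1`, this equals
`9/16 + 3/16 + c·(t - 1/2)^(1/5) = f₂ t`.
-/

noncomputable def oddRoot (n : ℕ) (x : ℝ) : ℝ :=
  if 0 ≤ x then x ^ ((1 : ℝ) / n) else -((-x) ^ ((1 : ℝ) / n))

noncomputable def f₂ (t : ℝ) : ℝ :=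
  3/4 + Real.sqrt (21/5) * ((2:ℝ) ^ ((1:ℝ)/5) / 4) * oddRoot 5 (t - 1/2)

open intervalIntegral
open MeasureTheory (volume)

theorem oddRoot_of_nonneg {x : ℝ} (hx : 0 ≤ x) (n : ℕ) : oddRoot n x = x ^ ((1 : ℝ) / n) :=
  if_pos hx

theorem oddRoot_zero {n : ℕ} (hn : n ≠ 0) : oddRoot n 0 = 0 := by
  rw [oddRoot_of_nonneg le_rfl, Real.zero_rpow (by positivity)]

theorem oddRoot_neg {n : ℕ} (hn : n ≠ 0) (x : ℝ) : oddRoot n (-x) = -oddRoot n x := by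
  rcases lt_trichotomy x 0 with hx | rfl | hx
  · rw [oddRoot, oddRoot, if_pos (by linarith), if_neg hx.not_ge, neg_neg]
  · rw [neg_zero, oddRoot_zero hn, neg_zero]
  · rw [oddRoot, oddRoot, if_neg (by linarith), if_pos hx.le, neg_neg]

theorem oddRoot_mul {n : ℕ} (hn : n ≠ 0) (x y : ℝ) :
    oddRoot n (x * y) = oddRoot n x * oddRoot n y := by
  have key : ∀ {a b : ℝ}, 0 ≤ a → 0 ≤ b → oddRoot n (a * b) = oddRoot n a * oddRoot n b :=
    fun ha hb => by
      rw [oddRoot_of_nonneg ha, oddRoot_of_nonneg hb, oddRoot_of_nonneg (mul_nonneg ha hb),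
        Real.mul_rpow ha hb]
  have flip : ∀ a, oddRoot n a = -oddRoot n (-a) := fun a => by rw [oddRoot_neg hn, neg_neg]
  rcases le_total 0 x with hx | hx <;> rcases le_total 0 y with hy | hy
  · exact key hx hy
  · rw [flip (x * y), ← mul_neg, key hx (neg_nonneg.2 hy), flip y, mul_neg]
  · rw [flip (x * y), ← neg_mul, key (neg_nonneg.2 hx) hy, flip x, neg_mul]
  · rw [← neg_mul_neg, key (neg_nonneg.2 hx) (neg_nonneg.2 hy), flip x, flip y, neg_mul_neg]

theorem oddRoot_one (n : ℕ) : oddRoot n 1 = 1 := by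
  rw [oddRoot_of_nonneg zero_le_one, Real.one_rpow]

theorem sq_oddRoot {n : ℕ} (hn : n ≠ 0) (x : ℝ) : oddRoot n x ^ 2 = |x| ^ ((2 : ℝ) / n) := by
  have key : ∀ {a : ℝ}, 0 ≤ a → oddRoot n a ^ 2 = |a| ^ ((2 : ℝ) / n) := fun ha => by
    rw [oddRoot_of_nonneg ha, abs_of_nonneg ha, ← Real.rpow_mul_natCast ha]
    ring_nf
  rcases le_total 0 x with hx | hx
  · exact key hx
  · rw [← abs_neg, ← key (neg_nonneg.2 hx), oddRoot_neg hn, neg_sq]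

theorem continuous_oddRoot {n : ℕ} (hn : n ≠ 0) : Continuous (oddRoot n) := by
  have hpos : (0 : ℝ) < 1 / n := by positivity
  have hroot : Continuous fun x : ℝ => x ^ ((1 : ℝ) / n) := Real.continuous_rpow_const hpos.le
  refine Continuous.if_le hroot (hroot.comp continuous_neg).neg continuous_const continuous_id ?_
  rintro x (rfl : 0 = x)
  simp [Real.zero_rpow (inv_ne_zero (Nat.cast_ne_zero.2 hn))]

theorem integral_symm_eq_integral_add_comp_neg {g : ℝ → ℝ} {a : ℝ}
    (hg : IntervalIntegrable g volume (-a) a) :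
    ∫ x in -a..a, g x = ∫ x in 0..a, (g x + g (-x)) := by
  have h0 : (0 : ℝ) ∈ Set.uIcc (-a) a := by
    rcases le_total 0 a with ha | ha
    · exact Set.mem_uIcc.2 (Or.inl ⟨by linarith, ha⟩)
    · exact Set.mem_uIcc.2 (Or.inr ⟨ha, by linarith⟩)
  have hleft : IntervalIntegrable g volume (-a) 0 := hg.mono_set (Set.uIcc_subset_uIcc_left h0)
  have hright : IntervalIntegrable g volume 0 a := hg.mono_set (Set.uIcc_subset_uIcc_right h0)
  have hneg : IntervalIntegrable (fun x => g (-x)) volume 0 a := by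
    simpa using ((IntervalIntegrable.iff_comp_neg).mp hleft).symm
  rw [integral_add hright hneg, integral_comp_neg, neg_zero, add_comm,
    integral_add_adjacent_intervals hleft hright]

theorem integral_sq_oddRoot {n : ℕ} (hn : n ≠ 0) {a : ℝ} (ha : 0 ≤ a) :
    ∫ x in 0..a, oddRoot n x ^ 2 = n / (n + 2) * a * oddRoot n a ^ 2 := by
  have hexp : (0 : ℝ) < 2 / n := by positivity
  have hcongr : Set.EqOn (fun x => oddRoot n x ^ 2) (fun x => x ^ ((2 : ℝ) / n)) (Set.uIcc 0 a) :=
    fun x hx => by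
      rw [Set.uIcc_of_le ha] at hx
      simp only [sq_oddRoot hn, abs_of_nonneg hx.1]
  rw [integral_congr hcongr, integral_rpow (Or.inl (by linarith)),
    Real.zero_rpow (by positivity), Real.rpow_add' ha (by positivity), Real.rpow_one,
    sq_oddRoot hn, abs_of_nonneg ha]
  field_simp
  ring

theorem integral_one_add_mul_oddRoot_mul_sq {n : ℕ} (hn : n ≠ 0) {a : ℝ} (ha : 0 ≤ a)
    (l b c : ℝ) :
    ∫ x in -a..a, (1 + l * oddRoot n x) * (b + c * oddRoot n x) ^ 2
      = 2 * a * b ^ 2 + 2 * (c ^ 2 + 2 * l * b * c) * (n / (n + 2) * a * oddRoot n a ^ 2) := by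
  have hcont := continuous_oddRoot hn
  have heven : ∀ x, (1 + l * oddRoot n x) * (b + c * oddRoot n x) ^ 2
      + (1 + l * oddRoot n (-x)) * (b + c * oddRoot n (-x)) ^ 2
      = 2 * b ^ 2 + 2 * (c ^ 2 + 2 * l * b * c) * oddRoot n x ^ 2 := fun x => by
    rw [oddRoot_neg hn]
    ring
  rw [integral_symm_eq_integral_add_comp_neg ((by fun_prop : Continuous _).intervalIntegrable _ _),
    funext heven,
    integral_add intervalIntegrable_const ((by fun_prop : Continuous _).intervalIntegrable _ _),
    integral_const, integral_const_mul, integral_sq_oddRoot hn ha, smul_eq_mul, sub_zero]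
  ring

theorem stmt1_general (t : ℝ) :
    ∫ u in (0:ℝ)..1,
      (1 + (14/15) * oddRoot 5 (4 * (t - 1/2) * (u - 1/2))) * (f₂ u)^2 = f₂ t := by
  have h5 : (5 : ℕ) ≠ 0 := by norm_num
  set c := Real.sqrt (21/5) * ((2:ℝ) ^ ((1:ℝ)/5) / 4) with hc_def
  set τ := oddRoot 5 (t - 1/2)
  have hintegrand : ∀ u, (1 + 14/15 * oddRoot 5 (4 * (t - 1/2) * (u - 1/2))) * f₂ u ^ 2
      = (1 + 14/15 * oddRoot 5 4 * τ * oddRoot 5 (u - 1/2)) * (3/4 + c * oddRoot 5 (u - 1/2)) ^ 2 :=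
    fun u => by rw [oddRoot_mul h5, oddRoot_mul h5, f₂]; ring
  have hroot : oddRoot 5 4 * oddRoot 5 (1/2) ^ 2 = 1 := by
    rw [sq, ← oddRoot_mul h5, ← oddRoot_mul h5]
    norm_num [oddRoot_one]
  have hc : c ^ 2 = 21/80 * oddRoot 5 4 := by
    have h2 : (2:ℝ) ^ ((1:ℝ)/5) = oddRoot 5 2 := by norm_num [oddRoot_of_nonneg]
    rw [hc_def, h2, mul_pow, div_pow, sq (oddRoot 5 2), ← oddRoot_mul h5,
      Real.sq_sqrt (by norm_num)]
    norm_num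
    ring
  rw [funext hintegrand, integral_comp_sub_right
      (fun x => (1 + 14/15 * oddRoot 5 4 * τ * oddRoot 5 x) * (3/4 + c * oddRoot 5 x) ^ 2),
    show (0:ℝ) - 1/2 = -(1/2) by norm_num, show (1:ℝ) - 1/2 = 1/2 by norm_num,
    integral_one_add_mul_oddRoot_mul_sq h5 (by norm_num), f₂]
  push_cast
  linear_combination (5/7 * oddRoot 5 (1/2) ^ 2) * hc + (3/16 + c * τ) * hroot

theorem stmt1 (t : ℝ) (ht : t ∈ Set.Icc (0:ℝ) 1) :
    ∫ u in (0:ℝ)..1,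
      (1 + (14/15) * oddRoot 5 (4 * (t - 1/2) * (u - 1/2))) * (f₂ u)^2 = f₂ t :=
  stmt1_general t
end

section
/- Let k ≥ 2 and suppose for each n > k that ξ_n ∈ (0,1) satisfies (1 + ξ_n^{n−1}/2)^{k+1} − (1 − ξ_n^{n−1}/2)^{k+1} = (k+1)·ξ_n^{n−k}. If along a subsequence n_p the sequence α_p = ξ_{n_p}^{n_p−1} converges to some α ∈ [0,1] and ξ_{n_p} → 1, then α satisfies (1+α/2)^{k+1} − (1−α/2)^{k+1} = (k+1)·α, hence α = 0. -/
/-!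
Passing to the limit in the defining relation, after writing `ξ ^ (n - k) = ξ ^ (n - 1) / ξ ^ (k - 1)`
with `ξ ^ (k - 1) → 1`, shows that `α` solves `(1 + x/2)^(k+1) - (1 - x/2)^(k+1) = (k+1) x`.
On `[0, 2]` the difference of the two sides vanishes at `0` and has derivative
`(k+1)/2 · ((1 + x/2)^k + (1 - x/2)^k) - (k+1)`, which is positive for `0 < x < 2` by strict
convexity of `y ↦ y ^ k` at the two points `1 ± x/2` whose mean is `1`; so `0` is the only root.
-/

open Set

namespace HalfPowGap

variable {k : ℕ}

noncomputable def gap (k : ℕ) (x : ℝ) : ℝ :=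
  (1 + x / 2) ^ (k + 1) - (1 - x / 2) ^ (k + 1) - (k + 1) * x

theorem hasDerivAt_gap (k : ℕ) (x : ℝ) :
    HasDerivAt (gap k) ((k + 1) / 2 * ((1 + x / 2) ^ k + (1 - x / 2) ^ k) - (k + 1)) x := by
  have hplus : HasDerivAt (fun y : ℝ => 1 + y / 2) (1 / 2) x := by
    simpa using ((hasDerivAt_id x).div_const 2).const_add 1
  have hminus : HasDerivAt (fun y : ℝ => 1 - y / 2) (-(1 / 2)) x := by
    simpa using ((hasDerivAt_id x).div_const 2).const_sub 1
  refine (((hplus.pow (k + 1)).sub (hminus.pow (k + 1))).sub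
    ((hasDerivAt_id x).const_mul ((k : ℝ) + 1))).congr_deriv ?_
  push_cast
  ring

theorem two_lt_one_add_half_pow_add_one_sub_half_pow (hk : 2 ≤ k) {x : ℝ} (hx₀ : 0 < x)
    (hx₂ : x < 2) : 2 < (1 + x / 2) ^ k + (1 - x / 2) ^ k := by
  have h := (strictConvexOn_pow hk).2 (x := 1 + x / 2) (y := 1 - x / 2)
    (by simp only [mem_Ici]; linarith) (by simp only [mem_Ici]; linarith) (by linarith)
    (by norm_num : (0 : ℝ) < 1 / 2) (by norm_num : (0 : ℝ) < 1 / 2) (by norm_num)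
  simp only [smul_eq_mul] at h
  rw [show 1 / 2 * (1 + x / 2) + 1 / 2 * (1 - x / 2) = (1 : ℝ) by ring, one_pow] at h
  linarith

theorem strictMonoOn_gap (hk : 2 ≤ k) : StrictMonoOn (gap k) (Icc 0 2) := by
  refine strictMonoOn_of_hasDerivWithinAt_pos (convex_Icc 0 2)
    (fun x _ => (hasDerivAt_gap k x).continuousAt.continuousWithinAt)
    (fun x _ => (hasDerivAt_gap k x).hasDerivWithinAt) ?_
  rw [interior_Icc]
  intro x ⟨hx₀, hx₂⟩
  have h := two_lt_one_add_half_pow_add_one_sub_half_pow hk hx₀ hx₂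
  have hk₁ : (0 : ℝ) < k + 1 := by positivity
  nlinarith

theorem eq_zero_of_gap_eq_zero (hk : 2 ≤ k) {x : ℝ} (hx : x ∈ Icc 0 2) (h : gap k x = 0) :
    x = 0 := by
  by_contra hne
  have hlt := strictMonoOn_gap hk (left_mem_Icc.mpr zero_le_two) hx
    (lt_of_le_of_ne hx.1 (Ne.symm hne))
  rw [h, show gap k 0 = 0 by simp [gap]] at hlt
  exact lt_irrefl 0 hlt

end HalfPowGap

open HalfPowGap in
theorem stmt13_general (k : ℕ) (hk : 2 ≤ k) (ξ : ℕ → ℝ)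
    (hξ : ∀ n, k < n → ξ n ∈ Set.Ioo (0:ℝ) 1 ∧
      (1 + (ξ n)^(n-1)/2)^(k+1) - (1 - (ξ n)^(n-1)/2)^(k+1) = ((k:ℝ)+1) * (ξ n)^(n-k))
    (np : ℕ → ℕ) (hnpk : ∀ p, k < np p)
    (α : ℝ) (hα : α ∈ Set.Icc (0:ℝ) 1)
    (hαlim : Filter.Tendsto (fun p => (ξ (np p))^(np p - 1)) Filter.atTop (nhds α))
    (hβlim : Filter.Tendsto (fun p => ξ (np p)) Filter.atTop (nhds 1)) :
    (1 + α/2)^(k+1) - (1 - α/2)^(k+1) = ((k:ℝ)+1) * α ∧ α = 0 := by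
  have hrel : ∀ p, (1 + ξ (np p) ^ (np p - 1) / 2) ^ (k + 1)
      - (1 - ξ (np p) ^ (np p - 1) / 2) ^ (k + 1) = ((k : ℝ) + 1) * (ξ (np p) ^ (np p - 1) * (ξ (np p) ^ (k - 1))⁻¹) := by
    intro p
    have hkn := hnpk p
    obtain ⟨⟨hξ₀, -⟩, heq⟩ := hξ (np p) hkn
    rw [heq, ← pow_sub₀ _ hξ₀.ne' (by omega), show np p - 1 - (k - 1) = np p - k by omega]
  have hlhs := (((hαlim.div_const 2).const_add 1).pow (k + 1)).sub
    (((hαlim.div_const 2).const_sub 1).pow (k + 1))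
  have hrhs := (hαlim.mul ((hβlim.pow (k - 1)).inv₀ (by simp))).const_mul ((k : ℝ) + 1)
  simp only [one_pow, inv_one, mul_one] at hrhs
  have hlim := tendsto_nhds_unique (hlhs.congr hrel) hrhs
  refine ⟨hlim, eq_zero_of_gap_eq_zero hk ⟨hα.1, by linarith [hα.2]⟩ ?_⟩
  simp [gap, hlim]

theorem stmt13 (k : ℕ) (hk : 2 ≤ k) (ξ : ℕ → ℝ)
    (hξ : ∀ n, k < n → ξ n ∈ Set.Ioo (0:ℝ) 1 ∧
      (1 + (ξ n)^(n-1)/2)^(k+1) - (1 - (ξ n)^(n-1)/2)^(k+1) = ((k:ℝ)+1) * (ξ n)^(n-k))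
    (np : ℕ → ℕ) (hnp : StrictMono np) (hnpk : ∀ p, k < np p)
    (α : ℝ) (hα : α ∈ Set.Icc (0:ℝ) 1)
    (hαlim : Filter.Tendsto (fun p => (ξ (np p))^(np p - 1)) Filter.atTop (nhds α))
    (hβlim : Filter.Tendsto (fun p => ξ (np p)) Filter.atTop (nhds 1)) :
    (1 + α/2)^(k+1) - (1 - α/2)^(k+1) = ((k:ℝ)+1) * α ∧ α = 0 :=
  stmt13_general k hk ξ hξ np hnpk α hα hαlim hβlim
end

section
/- Let k ≥ 2, n > k be integers and let β ∈ (0,1) satisfy (1 + β^{n−1}/2)^{k+1} − (1 − β^{n−1}/2)^{k+1} = (k+1)·β^{n−k}. Suppose the denominator D = (1/(k+2))·[(1 + β^{n−1}/2)^{k+2} − (1 − β^{n−1}/2)^{k+2}] − β^{n−k} is nonzero, and set γ = β^{3n−k−2}/D. Then f(t) = β + β^n·(t − 1/2) satisfies ∫₀¹ (1 + γ(t−1/2)(u−1/2))·f(u)^k du = f(t) for all t ∈ [0,1]. -/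
/-!
Write `f u = β + β^n (u - 1/2)`, so that `f(1) = β A` and `f(0) = β B` with `A, B = 1 ± β^(n-1)/2`.
Integrating powers of an affine function gives `∫₀¹ f^k = β^(k+1) (A^(k+1) - B^(k+1)) / ((k+1) β^n) = β`
by the defining equation of `β`, and, since `u - 1/2 = (f u - β) / β^n`,
`∫₀¹ (u - 1/2) f^k = β^(k+2-2n) D`. The factor `γ = β^(3n-k-2) / D` turns the latter into `β^n`.
-/

open intervalIntegral

theorem integral_pow_affine_centered (a b : ℝ) (ha : a ≠ 0) (k : ℕ) :
    ∫ u in (0:ℝ)..1, (b + a * (u - 1/2))^k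
      = ((b + a/2)^(k+1) - (b - a/2)^(k+1)) / ((k + 1) * a) := by
  have hcomp := integral_comp_mul_add (a := 0) (b := 1) (fun x : ℝ => x^k) ha (b - a/2)
  simp only [integral_pow, smul_eq_mul] at hcomp
  calc ∫ u in (0:ℝ)..1, (b + a * (u - 1/2))^k
      = ∫ u in (0:ℝ)..1, (a * u + (b - a/2))^k := by congr 1; ext u; ring
    _ = _ := by rw [hcomp]; field_simp; ring_nf

theorem integral_sub_half_mul_pow_affine_centered (a b : ℝ) (ha : a ≠ 0) (k : ℕ) :
    ∫ u in (0:ℝ)..1, (u - 1/2) * (b + a * (u - 1/2))^k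
      = (((b + a/2)^(k+2) - (b - a/2)^(k+2)) / ((k + 2) * a)
          - b * (((b + a/2)^(k+1) - (b - a/2)^(k+1)) / ((k + 1) * a))) / a := by
  have hpointwise : ∀ u : ℝ, (u - 1/2) * (b + a * (u - 1/2))^k
      = ((b + a * (u - 1/2))^(k+1) - b * (b + a * (u - 1/2))^k) / a := by
    intro u; field_simp; ring
  have hcont : ∀ m : ℕ, IntervalIntegrable (fun u : ℝ => (b + a * (u - 1/2))^m)
      MeasureTheory.volume 0 1 := fun m => by
    apply Continuous.intervalIntegrable; fun_prop
  simp only [hpointwise]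
  rw [integral_div, integral_sub (hcont _) ((hcont _).const_mul b), integral_const_mul,
    integral_pow_affine_centered a b ha, integral_pow_affine_centered a b ha]
  push_cast
  ring_nf

theorem add_pow_sub_sub_pow_of_mul (b s : ℝ) (m : ℕ) :
    (b + b * s / 2)^m - (b - b * s / 2)^m = b^m * ((1 + s/2)^m - (1 - s/2)^m) := by
  rw [mul_sub, ← mul_pow, ← mul_pow]
  ring_nf

section

variable {k n : ℕ} {β : ℝ}

theorem integral_pow_affine_centered_eq_self (hn : k < n) (hβ : β ≠ 0)
    (heq : (1 + β^(n-1)/2)^(k+1) - (1 - β^(n-1)/2)^(k+1) = ((k:ℝ)+1) * β^(n-k)) :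
    ∫ u in (0:ℝ)..1, (β + β^n * (u - 1/2))^k = β := by
  have hpow : β^(k+1) * β^(n-k) = β * β^n := by
    rw [← pow_add, ← pow_succ']; congr 1; omega
  rw [integral_pow_affine_centered _ _ (pow_ne_zero _ hβ), ← mul_pow_sub_one (by omega) β,
    add_pow_sub_sub_pow_of_mul, heq, mul_pow_sub_one (by omega) β]
  field_simp
  linear_combination hpow

theorem integral_sub_half_mul_pow_affine_centered_eq (hn : n ≠ 0) (hβ : β ≠ 0)
    (heq : (1 + β^(n-1)/2)^(k+1) - (1 - β^(n-1)/2)^(k+1) = ((k:ℝ)+1) * β^(n-k)) :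
    ∫ u in (0:ℝ)..1, (u - 1/2) * (β + β^n * (u - 1/2))^k
      = β^(k+2) * ((1/((k:ℝ)+2)) * ((1 + β^(n-1)/2)^(k+2) - (1 - β^(n-1)/2)^(k+2)) - β^(n-k))
          / (β^n * β^n) := by
  rw [integral_sub_half_mul_pow_affine_centered _ _ (pow_ne_zero _ hβ), ← mul_pow_sub_one hn β,
    add_pow_sub_sub_pow_of_mul, add_pow_sub_sub_pow_of_mul, heq]
  field_simp
  ring

end

theorem stmt17_general (k n : ℕ) (hn : k < n) (β : ℝ) (hβ : β ∈ Set.Ioo (0:ℝ) 1)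
    (heq : (1 + β^(n-1)/2)^(k+1) - (1 - β^(n-1)/2)^(k+1) = ((k:ℝ)+1) * β^(n-k))
    (D : ℝ)
    (hD : D = (1/((k:ℝ)+2)) * ((1 + β^(n-1)/2)^(k+2) - (1 - β^(n-1)/2)^(k+2)) - β^(n-k))
    (hD0 : D ≠ 0) (γ : ℝ) (hγ : γ = β^(3*n-k-2) / D)
    (t : ℝ) :
    ∫ u in (0:ℝ)..1,
      (1 + γ * (t - 1/2) * (u - 1/2)) * (β + β^n * (u - 1/2))^k
      = β + β^n * (t - 1/2) := by
  have hβ0 : β ≠ 0 := hβ.1.ne'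
  have hsplit : ∀ u : ℝ, (1 + γ * (t - 1/2) * (u - 1/2)) * (β + β^n * (u - 1/2))^k
      = (β + β^n * (u - 1/2))^k + γ * (t - 1/2) * ((u - 1/2) * (β + β^n * (u - 1/2))^k) := by
    intro u; ring
  simp only [hsplit]
  rw [integral_add (Continuous.intervalIntegrable (by fun_prop) _ _)
      (Continuous.intervalIntegrable (by fun_prop) _ _), integral_const_mul,
    integral_pow_affine_centered_eq_self hn hβ0 heq,
    integral_sub_half_mul_pow_affine_centered_eq (by omega) hβ0 heq, ← hD]
  have hpow : β^(3*n-k-2) * β^(k+2) = β^n * (β^n * β^n) := by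
    rw [← pow_add, ← pow_add, ← pow_add]; congr 1; omega
  have hγ_moment : γ * (β^(k+2) * D / (β^n * β^n)) = β^n := by
    rw [hγ]; field_simp; linear_combination hpow
  linear_combination (t - 1/2) * hγ_moment

theorem stmt17 (k n : ℕ) (hk : 2 ≤ k) (hn : k < n) (β : ℝ) (hβ : β ∈ Set.Ioo (0:ℝ) 1)
    (heq : (1 + β^(n-1)/2)^(k+1) - (1 - β^(n-1)/2)^(k+1) = ((k:ℝ)+1) * β^(n-k))
    (D : ℝ)
    (hD : D = (1/((k:ℝ)+2)) * ((1 + β^(n-1)/2)^(k+2) - (1 - β^(n-1)/2)^(k+2)) - β^(n-k))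
    (hD0 : D ≠ 0) (γ : ℝ) (hγ : γ = β^(3*n-k-2) / D)
    (t : ℝ) (ht : t ∈ Set.Icc (0:ℝ) 1) :
    ∫ u in (0:ℝ)..1,
      (1 + γ * (t - 1/2) * (u - 1/2)) * (β + β^n * (u - 1/2))^k
      = β + β^n * (t - 1/2) :=
  stmt17_general k n hn β hβ heq D hD hD0 γ hγ t
end
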